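/- Let s > 0 and y ∈ int P. Suppose λ₁, …, λ_{n+1} ≥ 0 with Σ_{i=1}^{n+1} λᵢ = 1 and y₁, …, y_{n+1} ∈ P satisfy y = Σ_{i=1}^{n+1} λᵢ yᵢ and u_s**(y) = Σ_{i=1}^{n+1} λᵢ u_s(yᵢ). Then yᵢ ∈ int P for every index i with λᵢ > 0. -/

import Mathlib

noncomputable section

open Set MeasureTheory Topology Filter
open scoped RealInnerProductSpace Pointwise

/-- Euclidean space ℝⁿ. -/
abbrev E (n : ℕ) := EuclideanSpace ℝ (Fin n)

/-- The affine functions `l_k(y) = ⟨y, v_k⟩ − λ_k` defining the polytope. -/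
def lfun {n d : ℕ} (v : Fin d → E n) (lam : Fin d → ℝ) (k : Fin d) (y : E n) : ℝ :=
  ⟪y, v k⟫ - lam k

/-- The polytope `P = ⋂_k {l_k ≥ 0}`. -/
def Pset {n d : ℕ} (v : Fin d → E n) (lam : Fin d → ℝ) : Set (E n) :=
  {y | ∀ k, 0 ≤ lfun v lam k y}

/-- Guillemin's canonical symplectic potential `u_G = Σ l_k log l_k`
(note `Real.log 0 = 0`, so `t log t = 0` at `t = 0`). -/
def uG {n d : ℕ} (v : Fin d → E n) (lam : Fin d → ℝ) (y : E n) : ℝ :=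
  ∑ k, lfun v lam k y * Real.log (lfun v lam k y)

/-- The biconjugate (convex envelope) over `P`:
`g**(y) = sup {a(y) : a affine on ℝⁿ, a ≤ g on P}`. -/
def biconj {n : ℕ} (P : Set (E n)) (g : E n → ℝ) (y : E n) : ℝ :=
  sSup {r : ℝ | ∃ (a : E n →L[ℝ] ℝ) (c : ℝ), (∀ z ∈ P, a z + c ≤ g z) ∧ r = a y + c}

/-- The subdifferential of `g : P → ℝ` at `y`, relative to `P`. -/
def subdiff {n : ℕ} (P : Set (E n)) (g : E n → ℝ) (y : E n) : Set (E n) :=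
  {w | ∀ z ∈ P, g y + ⟪w, z - y⟫ ≤ g z}

/-- The subdifferential of a finite (convex) function on all of ℝⁿ. -/
def subdiffR {n : ℕ} (f : E n → ℝ) (x : E n) : Set (E n) :=
  {w | ∀ z, f x + ⟪w, z - x⟫ ≤ f z}

/-- The total subdifferential of `ψ(s,x)` at `(s,x)`, a subset of `ℝ × ℝⁿ = ℝ^{n+1}`. -/
def subdiffT {n : ℕ} (ψ : ℝ → E n → ℝ) (s : ℝ) (x : E n) : Set (ℝ × E n) :=
  {w | ∀ t z, ψ s x + w.1 * (t - s) + ⟪w.2, z - x⟫ ≤ ψ t z}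

/-- The set of reachable partial `x`-subgradients `γ_x ψ(s,x)`. -/
def reachable {n : ℕ} (ψ : ℝ → E n → ℝ) (s : ℝ) (x : E n) : Set (E n) :=
  {w | ∃ xk : ℕ → E n, (∀ k, DifferentiableAt ℝ (ψ s) (xk k)) ∧
    Tendsto xk atTop (𝓝 x) ∧
    Tendsto (fun k => gradient (ψ s) (xk k)) atTop (𝓝 w)}

/-- `P` is a compact Delzant polytope with nonempty interior, cut out by the `l_k`,
with all facets of dimension `n−1`, and every vertex lying on exactly `n` of the
hyperplanes `{l_k = 0}` with linearly independent normals. -/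
def GoodPolytope {n d : ℕ} (v : Fin d → E n) (lam : Fin d → ℝ) (P : Set (E n)) : Prop :=
  P = Pset v lam ∧ IsCompact P ∧ (interior P).Nonempty ∧
  (∀ k, Module.finrank ℝ (affineSpan ℝ (P ∩ {y | lfun v lam k y = 0})).direction = n - 1) ∧
  (∀ p ∈ Set.extremePoints ℝ P, ∃ K : Finset (Fin d), K.card = n ∧
    (∀ k, k ∈ K ↔ lfun v lam k p = 0) ∧ LinearIndependent ℝ (fun k : K => v ↑k))

/-- The Cauchy data: `u₀ − u_G` extends smoothly to a neighborhood of `P`, `u₀` is convex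
on `P`, smooth with positive definite Hessian on `int P`; `u̇₀` extends smoothly to a
neighborhood of `P`. -/
def GoodData {n d : ℕ} (v : Fin d → E n) (lam : Fin d → ℝ) (P : Set (E n))
    (u₀ udot : E n → ℝ) : Prop :=
  (∃ U : Set (E n), IsOpen U ∧ P ⊆ U ∧ ∃ F : E n → ℝ, ContDiffOn ℝ (⊤ : ℕ∞) F U ∧
    ∀ y ∈ P, u₀ y = uG v lam y + F y) ∧
  ConvexOn ℝ P u₀ ∧
  ContDiffOn ℝ (⊤ : ℕ∞) u₀ (interior P) ∧
  (∀ y ∈ interior P, ∀ w : E n, w ≠ 0 → 0 < ⟪(fderiv ℝ (gradient u₀) y) w, w⟫) ∧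
  (∃ U : Set (E n), IsOpen U ∧ P ⊆ U ∧ ContDiffOn ℝ (⊤ : ℕ∞) udot U)

/-! If some `yᵢ` with `λᵢ > 0` lay on a facet `{l_k = 0}`, pull every `yᵢ` towards `y` along
its segment. The moved points still average to `y`, so by optimality of the decomposition
`t ↦ Σ λᵢ u_s(yᵢ + t (y - yᵢ))` is minimal at `t = 0`. But along the segment from such a `yᵢ`,
`l_k` is `t l_k(y)` and `t ↦ t log t` has slope `-∞` at `0`, while every other term of
`u_s = u_G + (smooth)` has right slope bounded above at `0`: the sum decreases for small `t > 0`. -/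

open AffineMap

theorem Filter.tendsto_sum_atBot_of_isBoundedUnder_le {ι α G : Type*} [AddCommGroup G]
    [PartialOrder G] [IsOrderedAddMonoid G] {l : Filter α} {s : Finset ι} {f : ι → α → G}
    {i : ι} (hi : i ∈ s) (hfi : Tendsto (f i) l atBot)
    (hf : ∀ j ∈ s, IsBoundedUnder (· ≤ ·) l (f j)) :
    Tendsto (fun x => ∑ j ∈ s, f j x) l atBot := by
  classical
  simp_rw [← Finset.add_sum_erase s _ hi]
  obtain ⟨C, hC⟩ := isBoundedUnder_le_sum (s.erase i) fun j hj => hf j (Finset.mem_of_mem_erase hj)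
  exact tendsto_atBot_add_right_of_ge' l C hfi (by simpa using hC)

theorem slope_finset_sum {𝕜 V ι : Type*} [Field 𝕜] [AddCommGroup V] [Module 𝕜 V]
    (s : Finset ι) (f : ι → 𝕜 → V) (a b : 𝕜) :
    slope (fun t => ∑ i ∈ s, f i t) a b = ∑ i ∈ s, slope (f i) a b := by
  simp only [slope_def_module, ← Finset.sum_sub_distrib, Finset.smul_sum]

theorem slope_const_mul {𝕜 : Type*} [Field 𝕜] (c : 𝕜) (f : 𝕜 → 𝕜) (a b : 𝕜) :
    slope (fun t => c * f t) a b = c * slope f a b := by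
  simp only [slope_def_field, ← mul_sub, mul_div_assoc]

theorem Finset.sum_smul_lineMap {R V ι : Type*} [CommRing R] [AddCommGroup V] [Module R V]
    {s : Finset ι} {w : ι → R} (hw : ∑ i ∈ s, w i = 1) (z : ι → V) (y : V) (t : R) :
    ∑ i ∈ s, w i • lineMap (z i) y t = lineMap (∑ i ∈ s, w i • z i) y t := by
  simp only [lineMap_apply_module, smul_add, Finset.sum_add_distrib, ← Finset.sum_smul, hw,
    one_smul, Finset.smul_sum]
  exact congrArg (· + t • y) (Finset.sum_congr rfl fun i _ => smul_comm _ _ _)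

theorem tendsto_slope_comp_lineMap_nhdsGT {V : Type*} [NormedAddCommGroup V] [NormedSpace ℝ V]
    {G : V → ℝ} {x : V} (hG : DifferentiableAt ℝ G x) (y : V) :
    Tendsto (slope (fun t : ℝ => G (lineMap x y t)) 0) (𝓝[>] 0) (𝓝 (fderiv ℝ G x (y - x))) := by
  have hderiv : HasDerivAt (fun t : ℝ => G (lineMap x y t)) (fderiv ℝ G x (y - x)) 0 := by
    have hG' : HasFDerivAt G (fderiv ℝ G x) (lineMap x y (0 : ℝ)) := by
      simpa using hG.hasFDerivAt
    exact hG'.comp_hasDerivAt (0 : ℝ) hasDerivAt_lineMap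
  exact (hasDerivAt_iff_tendsto_slope.mp hderiv).mono_left (nhdsGT_le_nhdsNE 0)

namespace Real

theorem tendsto_slope_mul_log_of_pos {α : ℝ} (hα : 0 < α) (β : ℝ) :
    Tendsto (slope (fun t => (α + t * (β - α)) * log (α + t * (β - α))) 0) (𝓝[>] 0)
      (𝓝 ((log α + 1) * (β - α))) := by
  have hpath : HasDerivAt (fun t : ℝ => α + t * (β - α)) (β - α) 0 :=
    (hasDerivAt_mul_const (β - α)).const_add α
  have hmul_log : HasDerivAt (fun x => x * log x) (log α + 1) (α + 0 * (β - α)) := by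
    simpa using hasDerivAt_mul_log hα.ne'
  exact (hasDerivAt_iff_tendsto_slope.mp (hmul_log.comp 0 hpath)).mono_left
    (nhdsGT_le_nhdsNE 0)

/-- At a boundary point the slope of `t ↦ tβ log (tβ)` is `β log t + β log β`. -/
theorem tendsto_slope_mul_log_atBot {β : ℝ} (hβ : 0 < β) :
    Tendsto (slope (fun t => t * β * log (t * β)) 0) (𝓝[>] 0) atBot := by
  have hlog : Tendsto (fun t => β * log t + β * log β) (𝓝[>] 0) atBot :=
    (tendsto_log_nhdsGT_zero.const_mul_atBot hβ).atBot_add tendsto_const_nhds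
  refine hlog.congr' ?_
  filter_upwards [self_mem_nhdsWithin] with t (ht : 0 < t)
  rw [slope_def_field, log_mul ht.ne' hβ.ne']
  simp only [zero_mul, log_zero, mul_zero, sub_zero]
  field_simp

theorem isBoundedUnder_le_slope_mul_log {α β : ℝ} (hα : 0 ≤ α) (hβ : 0 < β) :
    IsBoundedUnder (· ≤ ·) (𝓝[>] 0)
      (slope (fun t => (α + t * (β - α)) * log (α + t * (β - α))) 0) := by
  rcases hα.eq_or_lt with rfl | hα
  · simpa using (tendsto_slope_mul_log_atBot hβ).isBoundedUnder_le_atBot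
  · exact (tendsto_slope_mul_log_of_pos hα β).isBoundedUnder_le

end Real

section Polytope

variable {n d : ℕ} {v : Fin d → E n} {lam : Fin d → ℝ}

theorem lfun_lineMap (k : Fin d) (x y : E n) (t : ℝ) :
    lfun v lam k (lineMap x y t) = lfun v lam k x + t * (lfun v lam k y - lfun v lam k x) := by
  simp only [lfun, lineMap_apply_module', inner_add_left, inner_smul_left, inner_sub_left,
    RCLike.conj_to_real]
  ring

theorem continuous_lfun (k : Fin d) : Continuous (lfun v lam k) :=
  (continuous_id.inner continuous_const).sub continuous_const

theorem continuous_uG : Continuous (uG v lam) :=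
  continuous_finsetSum _ fun k _ => Real.continuous_mul_log.comp (continuous_lfun k)

theorem convex_Pset : Convex ℝ (Pset v lam) := by
  intro x hx y hy a b ha hb hab k
  have hcomb : lfun v lam k (a • x + b • y) = a * lfun v lam k x + b * lfun v lam k y := by
    simp only [lfun, inner_add_left, real_inner_smul_left]
    linear_combination lam k * hab
  rw [hcomb]
  exact add_nonneg (mul_nonneg ha (hx k)) (mul_nonneg hb (hy k))

theorem mem_interior_Pset_of_forall_lfun_pos {y : E n} (hy : ∀ k, 0 < lfun v lam k y) :
    y ∈ interior (Pset v lam) := by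
  have hopen : IsOpen (⋂ k, lfun v lam k ⁻¹' Ioi 0) :=
    isOpen_iInter_of_finite fun k => isOpen_Ioi.preimage (continuous_lfun k)
  refine interior_maximal (fun z hz k => ?_) hopen (mem_iInter.mpr hy)
  exact le_of_lt (mem_iInter.mp hz k)

/-- An affine function vanishing at an interior point of its superlevel set `{l ≥ 0}` has a
local minimum there, so its gradient `v k` vanishes. -/
theorem lfun_pos_of_mem_interior_of_ne_zero {k : Fin d} (hv : v k ≠ 0) {y : E n}
    (hy : y ∈ interior (Pset v lam)) : 0 < lfun v lam k y := by
  refine (interior_subset hy k).lt_of_ne fun hzero => hv ?_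
  have hmin : IsLocalMin (lfun v lam k) y := by
    filter_upwards [mem_interior_iff_mem_nhds.mp hy] with z hz
    exact hzero ▸ hz k
  have hderiv : HasFDerivAt (lfun v lam k) (innerSL ℝ (v k)) y := by
    have hlfun : lfun v lam k = fun z => innerSL ℝ (v k) z - lam k := by
      ext z
      simp [lfun, real_inner_comm]
    rw [hlfun]
    exact (innerSL ℝ (v k)).hasFDerivAt.sub_const _
  have hzero_inner : ⟪v k, v k⟫ = 0 := by
    simpa using congrArg (· (v k)) (hmin.hasFDerivAt_eq_zero hderiv)
  exact inner_self_eq_zero.mp hzero_inner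

theorem lfun_pos_of_mem_interior (hn : 1 ≤ n) {k : Fin d}
    (hfacet : Module.finrank ℝ
      (affineSpan ℝ (Pset v lam ∩ {y | lfun v lam k y = 0})).direction = n - 1)
    {y : E n} (hy : y ∈ interior (Pset v lam)) : 0 < lfun v lam k y := by
  by_cases hv : v k = 0
  · have hconst : ∀ z, lfun v lam k z = -lam k := fun z => by simp [lfun, hv]
    refine (interior_subset hy k).lt_of_ne fun hzero => ?_
    have hfacet_eq : Pset v lam ∩ {y | lfun v lam k y = 0} = Pset v lam :=
      inter_eq_left.mpr fun z _ => show lfun v lam k z = 0 by rw [hconst, ← hconst y, hzero]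
    have hspan : affineSpan ℝ (Pset v lam) = ⊤ :=
      affineSpan_eq_top_of_nonempty_interior ⟨y, interior_mono (subset_convexHull ℝ _) hy⟩
    rw [hfacet_eq, hspan, AffineSubspace.direction_top, finrank_top,
      finrank_euclideanSpace_fin] at hfacet
    omega
  · exact lfun_pos_of_mem_interior_of_ne_zero hv hy

theorem slope_uG_comp_lineMap (x y : E n) :
    slope (fun t : ℝ => uG v lam (lineMap x y t)) 0 = fun t => ∑ k, slope
      (fun t => (lfun v lam k x + t * (lfun v lam k y - lfun v lam k x)) *
        Real.log (lfun v lam k x + t * (lfun v lam k y - lfun v lam k x))) 0 t := by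
  ext t
  simp only [uG, lfun_lineMap]
  exact slope_finset_sum _ _ 0 t

variable {x y : E n} {g G : E n → ℝ}

theorem slope_comp_lineMap_eventuallyEq_add (hg : ∀ z ∈ Pset v lam, g z = uG v lam z + G z)
    (hx : x ∈ Pset v lam) (hy : y ∈ Pset v lam) :
    slope (fun t : ℝ => g (lineMap x y t)) 0 =ᶠ[𝓝[>] 0]
      slope (fun t : ℝ => uG v lam (lineMap x y t)) 0 +
        slope (fun t : ℝ => G (lineMap x y t)) 0 := by
  filter_upwards [Ioc_mem_nhdsGT zero_lt_one] with t ht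
  have hmem : ∀ t ∈ Icc (0 : ℝ) 1, lineMap x y t ∈ Pset v lam := fun t ht =>
    convex_Pset.lineMap_mem hx hy ht
  simp only [Pi.add_apply, slope_def_field, hg _ (hmem t (Ioc_subset_Icc_self ht)),
    lineMap_apply_zero, hg x hx]
  ring

theorem isBoundedUnder_le_slope_comp_lineMap (hg : ∀ z ∈ Pset v lam, g z = uG v lam z + G z)
    (hG : DifferentiableAt ℝ G x) (hx : x ∈ Pset v lam) (hy : ∀ k, 0 < lfun v lam k y) :
    IsBoundedUnder (· ≤ ·) (𝓝[>] 0) (slope (fun t : ℝ => g (lineMap x y t)) 0) := by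
  refine IsBoundedUnder.mono_le ?_
    (slope_comp_lineMap_eventuallyEq_add hg hx fun k => (hy k).le).le
  refine isBoundedUnder_le_add ?_ (tendsto_slope_comp_lineMap_nhdsGT hG y).isBoundedUnder_le
  rw [slope_uG_comp_lineMap, ← Finset.sum_fn]
  exact isBoundedUnder_le_sum _ fun k _ => Real.isBoundedUnder_le_slope_mul_log (hx k) (hy k)

/-- The `l_k log l_k` term of a facet through `x` has slope `-∞` at `x`. -/
theorem tendsto_slope_comp_lineMap_atBot (hg : ∀ z ∈ Pset v lam, g z = uG v lam z + G z)
    (hG : DifferentiableAt ℝ G x) (hx : x ∈ Pset v lam) (hy : ∀ k, 0 < lfun v lam k y)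
    {k₀ : Fin d} (hk₀ : lfun v lam k₀ x = 0) :
    Tendsto (slope (fun t : ℝ => g (lineMap x y t)) 0) (𝓝[>] 0) atBot := by
  refine Tendsto.congr' (slope_comp_lineMap_eventuallyEq_add hg hx fun k => (hy k).le).symm ?_
  refine Tendsto.atBot_add ?_ (tendsto_slope_comp_lineMap_nhdsGT hG y)
  rw [slope_uG_comp_lineMap]
  refine Filter.tendsto_sum_atBot_of_isBoundedUnder_le (Finset.mem_univ k₀) ?_
    fun k _ => Real.isBoundedUnder_le_slope_mul_log (hx k) (hy k)
  simpa [hk₀] using Real.tendsto_slope_mul_log_atBot (hy k₀)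

end Polytope

theorem biconj_le_sum_mul {n : ℕ} {P : Set (E n)} {g : E n → ℝ} (hg : BddBelow (g '' P))
    {ι : Type*} {s : Finset ι} {w : ι → ℝ} (hw₀ : ∀ i ∈ s, 0 ≤ w i) (hw₁ : ∑ i ∈ s, w i = 1)
    {z : ι → E n} (hz : ∀ i ∈ s, z i ∈ P) :
    biconj P g (∑ i ∈ s, w i • z i) ≤ ∑ i ∈ s, w i * g (z i) := by
  obtain ⟨m, hm⟩ := hg
  refine csSup_le ⟨_, 0, m, fun z hz => by simpa using hm (mem_image_of_mem g hz), rfl⟩ ?_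
  rintro r ⟨a, c, hac, rfl⟩
  calc a (∑ i ∈ s, w i • z i) + c = ∑ i ∈ s, w i * (a (z i) + c) := by
        simp only [map_sum, map_smul, smul_eq_mul, mul_add, Finset.sum_add_distrib,
          ← Finset.sum_mul, hw₁, one_mul]
    _ ≤ ∑ i ∈ s, w i * g (z i) :=
        Finset.sum_le_sum fun i hi => mul_le_mul_of_nonneg_left (hac _ (hz i hi)) (hw₀ i hi)

/-- Pulling every point of an optimal decomposition of `y` towards `y` keeps a decomposition of
`y`, so it cannot lower the value `Σ wᵢ g(yᵢ) = g**(y)`. -/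
theorem slope_sum_comp_lineMap_nonneg {n : ℕ} {P : Set (E n)} (hP : Convex ℝ P) {g : E n → ℝ}
    (hg : BddBelow (g '' P)) {ι : Type*} [Fintype ι] {w : ι → ℝ} (hw₀ : ∀ i, 0 ≤ w i)
    (hw₁ : ∑ i, w i = 1) {z : ι → E n} (hz : ∀ i, z i ∈ P) {y : E n} (hy : y ∈ P)
    (hconv : y = ∑ i, w i • z i) (hval : biconj P g y = ∑ i, w i * g (z i))
    {t : ℝ} (ht : t ∈ Ioc 0 1) :
    0 ≤ slope (fun t : ℝ => ∑ i, w i * g (lineMap (z i) y t)) 0 t := by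
  refine (slope_nonneg_iff_of_le ht.1.le).mpr ?_
  have hsum : ∑ i, w i • lineMap (z i) y t = y := by
    rw [Finset.sum_smul_lineMap hw₁, ← hconv, lineMap_same_apply]
  calc ∑ i, w i * g (lineMap (z i) y (0 : ℝ)) = biconj P g y := by simp [hval]
    _ ≤ ∑ i, w i * g (lineMap (z i) y t) := by
        conv_lhs => rw [← hsum]
        exact biconj_le_sum_mul hg (fun i _ => hw₀ i) hw₁
          fun i _ => hP.lineMap_mem (hz i) hy (Ioc_subset_Icc_self ht)

theorem GoodData.exists_eq_uG_add {n d : ℕ} {v : Fin d → E n} {lam : Fin d → ℝ}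
    {P : Set (E n)} {u₀ udot : E n → ℝ} (hD : GoodData v lam P u₀ udot) (s : ℝ) :
    ∃ G : E n → ℝ, (∀ z ∈ P, DifferentiableAt ℝ G z) ∧
      ∀ z ∈ P, u₀ z + s * udot z = uG v lam z + G z := by
  obtain ⟨⟨U, hUo, hPU, F, hF, hu₀F⟩, -, -, -, ⟨V, hVo, hPV, hudot⟩⟩ := hD
  refine ⟨fun z => F z + s * udot z, fun z hz => ?_, fun z hz => by rw [hu₀F z hz]; ring⟩
  exact ((hF.contDiffAt (hUo.mem_nhds (hPU hz))).differentiableAt (by simp)).add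
    (((hudot.contDiffAt (hVo.mem_nhds (hPV hz))).differentiableAt (by simp)).const_mul s)

theorem called_upon_points_interior_general
    {n d : ℕ} (hn : 1 ≤ n)
    (v : Fin d → E n) (lam : Fin d → ℝ) (P : Set (E n))
    (hP : GoodPolytope v lam P)
    (u₀ udot : E n → ℝ) (hD : GoodData v lam P u₀ udot)
    (u : ℝ → E n → ℝ) (hu : ∀ s y, u s y = u₀ y + s * udot y)
    (s : ℝ) (y : E n) (hy : y ∈ interior P)
    (lam' : Fin (n + 1) → ℝ) (hl0 : ∀ i, 0 ≤ lam' i) (hl1 : ∑ i, lam' i = 1)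
    (ys : Fin (n + 1) → E n) (hys : ∀ i, ys i ∈ P)
    (hconv : y = ∑ i, lam' i • ys i)
    (hval : biconj P (u s) y = ∑ i, lam' i * u s (ys i)) :
    ∀ i, 0 < lam' i → ys i ∈ interior P := by
  obtain ⟨rfl, hPc, -, hfacet, -⟩ := hP
  obtain ⟨G, hG, hu₀G⟩ := hD.exists_eq_uG_add s
  have hus : ∀ z ∈ Pset v lam, u s z = uG v lam z + G z := fun z hz => by rw [hu, hu₀G z hz]
  have hbdd : BddBelow (u s '' Pset v lam) := hPc.bddBelow_image <|
    (continuous_uG.continuousOn.add fun z hz => (hG z hz).continuousAt.continuousWithinAt).congr hus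
  have hypos : ∀ k, 0 < lfun v lam k y := fun k => lfun_pos_of_mem_interior hn (hfacet k) hy
  by_contra! hbdry
  obtain ⟨i₀, hi₀, hi₀_bdry⟩ := hbdry
  obtain ⟨k₀, hk₀⟩ : ∃ k, lfun v lam k (ys i₀) = 0 := by
    by_contra! hne
    exact hi₀_bdry (mem_interior_Pset_of_forall_lfun_pos fun k => (hys i₀ k).lt_of_ne' (hne k))
  have hslope : slope (fun t : ℝ => ∑ i, lam' i * u s (lineMap (ys i) y t)) 0 =
      fun t => ∑ i, lam' i * slope (fun t : ℝ => u s (lineMap (ys i) y t)) 0 t := by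
    ext t
    simp only [slope_finset_sum, slope_const_mul]
  have hatBot : Tendsto (slope (fun t : ℝ => ∑ i, lam' i * u s (lineMap (ys i) y t)) 0)
      (𝓝[>] 0) atBot := by
    rw [hslope]
    refine Filter.tendsto_sum_atBot_of_isBoundedUnder_le (Finset.mem_univ i₀)
      ((tendsto_slope_comp_lineMap_atBot hus (hG _ (hys i₀)) (hys i₀) hypos hk₀).const_mul_atBot
        hi₀) fun i _ => (monotone_mul_left_of_nonneg (hl0 i)).isBoundedUnder_le_comp
          (isBoundedUnder_le_slope_comp_lineMap hus (hG _ (hys i)) (hys i) hypos)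
  obtain ⟨t, hneg, ht⟩ := ((hatBot.eventually_lt_atBot 0).and (Ioc_mem_nhdsGT zero_lt_one)).exists
  exact hneg.not_ge (slope_sum_comp_lineMap_nonneg convex_Pset hbdd hl0 hl1 hys
    (interior_subset hy) hconv hval ht)

/-- If `y ∈ int P` is written as a convex combination
`y = Σ λᵢ yᵢ` of points `yᵢ ∈ P` with `u_s**(y) = Σ λᵢ u_s(yᵢ)`, then every point
`yᵢ` with `λᵢ > 0` ("called upon" by `y`) lies in `int P`. -/
theorem called_upon_points_interior
    {n d : ℕ} (hn : 1 ≤ n)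
    (v : Fin d → E n) (lam : Fin d → ℝ) (P : Set (E n))
    (hP : GoodPolytope v lam P)
    (u₀ udot : E n → ℝ) (hD : GoodData v lam P u₀ udot)
    (u : ℝ → E n → ℝ) (hu : ∀ s y, u s y = u₀ y + s * udot y)
    (A : ℝ → Set (E n)) (hA : ∀ s, A s = {y ∈ P | u s y ≠ biconj P (u s) y})
    (s : ℝ) (hs : 0 < s) (y : E n) (hy : y ∈ interior P)
    (lam' : Fin (n + 1) → ℝ) (hl0 : ∀ i, 0 ≤ lam' i) (hl1 : ∑ i, lam' i = 1)
    (ys : Fin (n + 1) → E n) (hys : ∀ i, ys i ∈ P)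
    (hconv : y = ∑ i, lam' i • ys i)
    (hval : biconj P (u s) y = ∑ i, lam' i * u s (ys i)) :
    ∀ i, 0 < lam' i → ys i ∈ interior P :=
  called_upon_points_interior_general hn v lam P hP u₀ udot hD u hu s y hy lam' hl0 hl1 ys hys hconv
    hval
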